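/- Let P be an m-point homogeneous polytope in R^n (m ≥ 1) such that the prism P̃ = P × [0,c] is rigidly two-layered (c² ∉ D(P)). Then P̃ is an m-point homogeneous polytope in R^{n+1}. -/

import Mathlib

/-!
The vertex set of the prism is the `L²` product of `M` with the two-point layer set `{0, c}`,
so the squared distance of two prism vertices is that of their bases plus that of their
heights, and the latter is `0` or `c²`. If two tuples of prism vertices have the same
distances, their height parts agree pairwise: otherwise `c²` would be the difference of two
squared distances in `M`. Hence the base parts agree too. Homogeneity of `M` moves the base
tuple, the two-point set `{0, c}` is homogeneous via the identity or the swap (the reflection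
in the layer coordinate), and the product of these two isometries moves the prism tuple.
-/

/-- A subset `M` of a metric space is `m`-point homogeneous if every distance-preserving
correspondence between two `m`-tuples of points of `M` is realized by an isometry of `M`. -/
def mPointHomogeneous {X : Type*} [MetricSpace X] (M : Set X) (m : ℕ) : Prop :=
  ∀ A B : Fin m → ↥M, (∀ i j, dist (A i) (A j) = dist (B i) (B j)) →
    ∃ e : ↥M ≃ᵢ ↥M, ∀ i, e (A i) = B i

/-- The vertex set of the prism `P × [0,c]` in `ℝⁿ × ℝ` (with the `L²` product metric),
where `M` is the vertex set of `P`. -/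
def prismSet (n : ℕ) (M : Set (EuclideanSpace ℝ (Fin n))) (c : ℝ) :
    Set (WithLp 2 (EuclideanSpace ℝ (Fin n) × ℝ)) :=
  {P | (WithLp.equiv 2 (EuclideanSpace ℝ (Fin n) × ℝ) P).1 ∈ M ∧
       ((WithLp.equiv 2 (EuclideanSpace ℝ (Fin n) × ℝ) P).2 = 0 ∨
        (WithLp.equiv 2 (EuclideanSpace ℝ (Fin n) × ℝ) P).2 = c)}

/-- The set `D(M)` of the paper: the prism over `M` of height `c` is rigidly two-layered iff
`c ^ 2 ∉ sqDistDiffs M`. -/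
def sqDistDiffs {X : Type*} [MetricSpace X] (M : Set X) : Set ℝ :=
  {d | ∃ x ∈ M, ∃ y ∈ M, ∃ z ∈ M, ∃ w ∈ M, d = |dist x y ^ 2 - dist z w ^ 2|}

theorem WithLp.prod_dist_sq_eq_of_L2 {α β : Type*} [PseudoMetricSpace α] [PseudoMetricSpace β]
    (x y : WithLp 2 (α × β)) : dist x y ^ 2 = dist x.fst y.fst ^ 2 + dist x.snd y.snd ^ 2 := by
  rw [WithLp.prod_dist_eq_add (by norm_num)]
  simp only [ENNReal.toReal_ofNat, Real.rpow_ofNat, one_div]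
  exact Real.rpow_inv_natCast_pow (n := 2) (by positivity) two_ne_zero

def IsometryEquiv.withLpProdSubtype {α β : Type*} [PseudoEMetricSpace α] [PseudoEMetricSpace β]
    (p : ENNReal) [Fact (1 ≤ p)] (s : Set α) (t : Set β) :
    WithLp p (s × t) ≃ᵢ (WithLp.ofLp ⁻¹' s ×ˢ t : Set (WithLp p (α × β))) where
  toFun q := ⟨WithLp.map p (Prod.map Subtype.val Subtype.val) q, q.fst.2, q.snd.2⟩
  invFun q := WithLp.toLp p (⟨q.1.fst, q.2.1⟩, ⟨q.1.snd, q.2.2⟩)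
  left_inv _ := rfl
  right_inv _ := rfl
  isometry_toFun := isometry_subtype_coe.withLpProdMap p isometry_subtype_coe

theorem eq_or_eq_of_mem_pair {α : Type*} {a b x u v : α} (hx : x ∈ ({a, b} : Set α))
    (hu : u ∈ ({a, b} : Set α)) (hv : v ∈ ({a, b} : Set α)) (huv : u ≠ v) : x = u ∨ x = v := by
  rcases hx with rfl | rfl <;> rcases hu with rfl | rfl <;> rcases hv with rfl | rfl <;> tauto

section Homogeneous

variable {X Y : Type*} [MetricSpace X] [MetricSpace Y]

theorem mPointHomogeneous_pair (a b : Y) (m : ℕ) : mPointHomogeneous ({a, b} : Set Y) m := by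
  classical
  intro A B hAB
  by_cases hid : ∀ i, A i = B i
  · exact ⟨IsometryEquiv.refl _, hid⟩
  push Not at hid
  obtain ⟨i₀, hne⟩ := hid
  have hpair : ∀ x : ({a, b} : Set Y), x = A i₀ ∨ x = B i₀ := fun x => by
    simpa only [Subtype.ext_iff] using eq_or_eq_of_mem_pair x.2 (A i₀).2 (B i₀).2
      (Subtype.coe_ne_coe.2 hne)
  let swap : ({a, b} : Set Y) ≃ᵢ ({a, b} : Set Y) :=
    { Equiv.swap (A i₀) (B i₀) with
      isometry_toFun := Isometry.of_dist_eq fun x y => by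
        rcases hpair x with rfl | rfl <;> rcases hpair y with rfl | rfl <;> simp [dist_comm] }
  refine ⟨swap, fun i => ?_⟩
  have hi := hAB i i₀
  rcases hpair (A i) with h | h <;> rcases hpair (B i) with h' | h' <;>
    simp_all [swap, dist_comm]

theorem mPointHomogeneous_withLpProd {m : ℕ} {M : Set X} {L : Set Y}
    (hM : mPointHomogeneous M m) (hL : mPointHomogeneous L m)
    (hrigid : ∀ x y z w : M, ∀ s t u v : L,
      dist x y ^ 2 + dist s t ^ 2 = dist z w ^ 2 + dist u v ^ 2 → dist s t = dist u v) :
    mPointHomogeneous (WithLp.ofLp ⁻¹' M ×ˢ L : Set (WithLp 2 (X × Y))) m := by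
  intro A B hAB
  let ψ := IsometryEquiv.withLpProdSubtype 2 M L
  have hsq : ∀ i j, dist (ψ.symm (A i)).fst (ψ.symm (A j)).fst ^ 2
        + dist (ψ.symm (A i)).snd (ψ.symm (A j)).snd ^ 2
      = dist (ψ.symm (B i)).fst (ψ.symm (B j)).fst ^ 2
        + dist (ψ.symm (B i)).snd (ψ.symm (B j)).snd ^ 2 := fun i j => by
    rw [← WithLp.prod_dist_sq_eq_of_L2, ← WithLp.prod_dist_sq_eq_of_L2, ψ.symm.dist_eq,
      ψ.symm.dist_eq, hAB]
  have hsnd := fun i j => hrigid _ _ _ _ _ _ _ _ (hsq i j)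
  have hfst : ∀ i j, dist (ψ.symm (A i)).fst (ψ.symm (A j)).fst
      = dist (ψ.symm (B i)).fst (ψ.symm (B j)).fst := fun i j => by
    have h := hsq i j
    rw [hsnd i j] at h
    exact (sq_eq_sq₀ dist_nonneg dist_nonneg).1 (by linarith)
  obtain ⟨e, he⟩ := hM _ _ hfst
  obtain ⟨σ, hσ⟩ := hL _ _ hsnd
  refine ⟨(ψ.symm.trans (e.withLpProdCongr 2 σ)).trans ψ, fun i => ?_⟩
  rw [IsometryEquiv.trans_apply, IsometryEquiv.trans_apply, ← ψ.apply_symm_apply (B i)]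
  congr 1
  change WithLp.toLp 2 (e (ψ.symm (A i)).fst, σ (ψ.symm (A i)).snd) = _
  rw [he, hσ]
  rfl

end Homogeneous

theorem dist_sq_eq_zero_or_sq_of_mem_pair {c s t : ℝ} (hs : s ∈ ({0, c} : Set ℝ))
    (ht : t ∈ ({0, c} : Set ℝ)) : dist s t ^ 2 = 0 ∨ dist s t ^ 2 = c ^ 2 := by
  rcases hs with rfl | rfl <;> rcases ht with rfl | rfl <;> simp [Real.dist_eq]

theorem dist_eq_of_sq_notMem_sqDistDiffs {X : Type*} [MetricSpace X] {M : Set X} {c : ℝ}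
    (hc : c ^ 2 ∉ sqDistDiffs M) (x y z w : M) (s t u v : ({0, c} : Set ℝ))
    (h : dist x y ^ 2 + dist s t ^ 2 = dist z w ^ 2 + dist u v ^ 2) : dist s t = dist u v := by
  by_contra hne
  simp only [Subtype.dist_eq] at h hne
  have hne_sq : dist (s : ℝ) t ^ 2 ≠ dist (u : ℝ) v ^ 2 := fun h =>
    hne ((sq_eq_sq₀ dist_nonneg dist_nonneg).1 h)
  refine hc ⟨x, x.2, y, y.2, z, z.2, w, w.2, ?_⟩
  rcases dist_sq_eq_zero_or_sq_of_mem_pair s.2 t.2 with hst | hst <;>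
    rcases dist_sq_eq_zero_or_sq_of_mem_pair u.2 v.2 with huv | huv
  · exact absurd (hst.trans huv.symm) hne_sq
  · rw [show dist (x : X) y ^ 2 - dist (z : X) w ^ 2 = c ^ 2 by linarith, abs_sq]
  · rw [show dist (x : X) y ^ 2 - dist (z : X) w ^ 2 = -c ^ 2 by linarith, abs_neg, abs_sq]
  · exact absurd (hst.trans huv.symm) hne_sq

theorem stmt_14 (n m : ℕ)
    (M : Set (EuclideanSpace ℝ (Fin n)))
    (hmph : mPointHomogeneous M m) (c : ℝ)
    (hrig : ¬ ∃ x ∈ M, ∃ y ∈ M, ∃ z ∈ M, ∃ w ∈ M,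
        c ^ 2 = |dist x y ^ 2 - dist z w ^ 2|) :
    mPointHomogeneous (prismSet n M c) m :=
  -- `prismSet n M c` is definitionally `WithLp.ofLp ⁻¹' M ×ˢ {0, c}`
  mPointHomogeneous_withLpProd hmph (mPointHomogeneous_pair 0 c m)
    (dist_eq_of_sq_notMem_sqDistDiffs hrig)
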